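/- Define ψ₁(ρ) := (2 − ρ² − 2√(1−ρ²))/ρ⁴ and ψ₂(ρ) := (2 − ρ²)/ρ⁴. Then for every ρ ∈ (0,1), both ψ₁ and ψ₂ satisfy the ordinary differential equation (ρ²−1) u″(ρ) + (6ρ − 5/ρ) u′(ρ) + 6 u(ρ) = 0, and their Wronskian satisfies ψ₁(ρ) ψ₂′(ρ) − ψ₁′(ρ) ψ₂(ρ) = −2/(ρ⁵ √(1−ρ²)). -/

import Mathlib

noncomputable section

/-- `ψ₁(ρ) = (2 − ρ² − 2√(1−ρ²))/ρ⁴`. -/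
def psiOne (ρ : ℝ) : ℝ := (2 - ρ ^ 2 - 2 * Real.sqrt (1 - ρ ^ 2)) / ρ ^ 4

/-- `ψ₂(ρ) = (2 − ρ²)/ρ⁴`. -/
def psiTwo (ρ : ℝ) : ℝ := (2 - ρ ^ 2) / ρ ^ 4

/-!
Substituting `u = v / ρ⁴` turns `(ρ²−1)u″ + (6ρ − 5/ρ)u′ + 6u` into
`((ρ²−1)v″ + (3/ρ − 2ρ)v′ + 2v) / ρ⁴`; the exponent 4 is the one for which the `ρ⁻²` term in
the coefficient of `v` cancels. The reduced equation is solved by `2 − ρ²` and `√(1−ρ²)`, and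
`ρ⁴ψ₁ = (2 − ρ²) − 2√(1−ρ²)`, `ρ⁴ψ₂ = 2 − ρ²`. The Wronskian of `v₁/ρ⁴, v₂/ρ⁴` is `ρ⁻⁸` times
that of `v₁, v₂`, which here is `−2ρ³/√(1−ρ²)`.
-/

open Filter Topology

theorem deriv_deriv_of_eventually_hasDerivAt {f f' : ℝ → ℝ} {f'' x : ℝ}
    (hf : ∀ᶠ y in 𝓝 x, HasDerivAt f (f' y) y) (hf' : HasDerivAt f' f'' x) :
    deriv (deriv f) x = f'' := by
  have hderiv : deriv f =ᶠ[𝓝 x] f' := hf.mono fun _ hy => hy.deriv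
  rw [hderiv.deriv_eq, hf'.deriv]

section DivPow

variable {v v' : ℝ → ℝ} {d x : ℝ}

theorem hasDerivAt_div_pow (n : ℕ) (hx : x ≠ 0) (hv : HasDerivAt v d x) :
    HasDerivAt (fun y => v y / y ^ n) (d / x ^ n - n * (v x / x ^ (n + 1))) x := by
  refine (hv.div (hasDerivAt_pow n x) (pow_ne_zero n hx)).congr_deriv ?_
  cases n with
  | zero => simp
  | succ n =>
    simp only [Nat.add_sub_cancel]
    field_simp
    ring

theorem deriv_div_pow (n : ℕ) (hx : x ≠ 0) (hv : HasDerivAt v d x) :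
    deriv (fun y => v y / y ^ n) x = d / x ^ n - n * (v x / x ^ (n + 1)) :=
  (hasDerivAt_div_pow n hx hv).deriv

theorem deriv_deriv_div_pow (n : ℕ) (hx : x ≠ 0) (hv : ∀ᶠ y in 𝓝 x, HasDerivAt v (v' y) y)
    (hv' : HasDerivAt v' d x) :
    deriv (deriv fun y => v y / y ^ n) x
      = d / x ^ n - 2 * n * (v' x / x ^ (n + 1)) + n * (n + 1) * (v x / x ^ (n + 2)) := by
  have hderiv : ∀ᶠ y in 𝓝 x, HasDerivAt (fun y => v y / y ^ n)
      (v' y / y ^ n - n * (v y / y ^ (n + 1))) y :=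
    (hv.and (eventually_ne_nhds hx)).mono fun y ⟨hvy, hy⟩ => hasDerivAt_div_pow n hy hvy
  rw [deriv_deriv_of_eventually_hasDerivAt hderiv
    ((hasDerivAt_div_pow n hx hv').sub
      ((hasDerivAt_div_pow (n + 1) hx hv.self_of_nhds).const_mul (n : ℝ)))]
  push_cast
  ring

theorem wronskian_div_pow {v₁ v₂ : ℝ → ℝ} {d₁ d₂ : ℝ} (n : ℕ) (hx : x ≠ 0)
    (h₁ : HasDerivAt v₁ d₁ x) (h₂ : HasDerivAt v₂ d₂ x) :
    v₁ x / x ^ n * deriv (fun y => v₂ y / y ^ n) x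
        - deriv (fun y => v₁ y / y ^ n) x * (v₂ x / x ^ n)
      = (v₁ x * d₂ - d₁ * v₂ x) / x ^ (2 * n) := by
  rw [deriv_div_pow n hx h₁, deriv_div_pow n hx h₂]
  field_simp
  ring

end DivPow

def spectralOperator (u : ℝ → ℝ) (ρ : ℝ) : ℝ :=
  (ρ ^ 2 - 1) * deriv (deriv u) ρ + (6 * ρ - 5 / ρ) * deriv u ρ + 6 * u ρ

theorem spectralOperator_div_pow_four {v v' : ℝ → ℝ} {d ρ : ℝ} (hρ : ρ ≠ 0)
    (hv : ∀ᶠ y in 𝓝 ρ, HasDerivAt v (v' y) y) (hv' : HasDerivAt v' d ρ) :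
    spectralOperator (fun y => v y / y ^ 4) ρ
      = ((ρ ^ 2 - 1) * d + (3 / ρ - 2 * ρ) * v' ρ + 2 * v ρ) / ρ ^ 4 := by
  rw [spectralOperator, deriv_deriv_div_pow 4 hρ hv hv', deriv_div_pow 4 hρ hv.self_of_nhds]
  field_simp
  ring

section SqrtOneSubSq

variable {x : ℝ}

theorem hasDerivAt_sqrt_one_sub_sq (hx : x ^ 2 < 1) :
    HasDerivAt (fun y => √(1 - y ^ 2)) (-x / √(1 - x ^ 2)) x := by
  have hpos : 0 < 1 - x ^ 2 := by linarith
  refine ((Real.hasDerivAt_sqrt hpos.ne').comp x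
    ((hasDerivAt_pow 2 x).const_sub 1)).congr_deriv ?_
  field_simp
  ring

theorem hasDerivAt_div_sqrt_one_sub_sq (hx : x ^ 2 < 1) :
    HasDerivAt (fun y => y / √(1 - y ^ 2)) (1 / √(1 - x ^ 2) ^ 3) x := by
  have hpos : 0 < 1 - x ^ 2 := by linarith
  have hs : 0 < √(1 - x ^ 2) := Real.sqrt_pos.mpr hpos
  refine ((hasDerivAt_id' x).div (hasDerivAt_sqrt_one_sub_sq hx) hs.ne').congr_deriv ?_
  field_simp
  rw [Real.sq_sqrt hpos.le]
  ring

end SqrtOneSubSq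

section Numerators

variable {y : ℝ}

theorem hasDerivAt_two_sub_sq_sub_two_sqrt (hy : y ^ 2 < 1) :
    HasDerivAt (fun y => 2 - y ^ 2 - 2 * √(1 - y ^ 2)) (-2 * y + 2 * (y / √(1 - y ^ 2))) y :=
  (((hasDerivAt_pow 2 y).const_sub 2).sub
    ((hasDerivAt_sqrt_one_sub_sq hy).const_mul 2)).congr_deriv (by ring)

theorem hasDerivAt_neg_two_mul_add_two_div_sqrt (hy : y ^ 2 < 1) :
    HasDerivAt (fun y => -2 * y + 2 * (y / √(1 - y ^ 2))) (-2 + 2 * (1 / √(1 - y ^ 2) ^ 3)) y :=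
  (((hasDerivAt_id' y).const_mul (-2)).add
    ((hasDerivAt_div_sqrt_one_sub_sq hy).const_mul 2)).congr_deriv (by ring)

theorem hasDerivAt_two_sub_sq : HasDerivAt (fun y => 2 - y ^ 2) (-2 * y) y :=
  ((hasDerivAt_pow 2 y).const_sub 2).congr_deriv (by ring)

theorem hasDerivAt_neg_two_mul : HasDerivAt (fun y => -2 * y) (-2) y := by
  simpa using (hasDerivAt_id' y).const_mul (-2)

end Numerators

/-- `ψ₁, ψ₂` form a fundamental system of
`(ρ²−1)u″ + (6ρ − 5/ρ)u′ + 6u = 0` on `(0,1)`, with Wronskian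
`ψ₁ψ₂′ − ψ₁′ψ₂ = −2/(ρ⁵√(1−ρ²))`. -/
theorem fundamental_system_lambda_one (ρ : ℝ) (hρ : ρ ∈ Set.Ioo (0:ℝ) 1) :
    ((ρ ^ 2 - 1) * deriv (deriv psiOne) ρ + (6 * ρ - 5 / ρ) * deriv psiOne ρ
        + 6 * psiOne ρ = 0)
    ∧ ((ρ ^ 2 - 1) * deriv (deriv psiTwo) ρ + (6 * ρ - 5 / ρ) * deriv psiTwo ρ
        + 6 * psiTwo ρ = 0)
    ∧ (psiOne ρ * deriv psiTwo ρ - deriv psiOne ρ * psiTwo ρ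
        = -2 / (ρ ^ 5 * Real.sqrt (1 - ρ ^ 2))) := by
  have hρ0 : ρ ≠ 0 := hρ.1.ne'
  have hρ1 : ρ ^ 2 < 1 := by nlinarith [hρ.1, hρ.2]
  have hnear : ∀ᶠ y in 𝓝 ρ, y ^ 2 < 1 :=
    (continuous_pow 2).continuousAt.eventually_lt continuousAt_const hρ1
  have hs : 0 < √(1 - ρ ^ 2) := Real.sqrt_pos.mpr (by linarith)
  have hs2 : √(1 - ρ ^ 2) ^ 2 = 1 - ρ ^ 2 := Real.sq_sqrt (by linarith)
  refine ⟨?_, ?_, ?_⟩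
  · refine (spectralOperator_div_pow_four hρ0
      (hnear.mono fun _ => hasDerivAt_two_sub_sq_sub_two_sqrt)
      (hasDerivAt_neg_two_mul_add_two_div_sqrt hρ1)).trans ?_
    field_simp
    linear_combination (2 - 4 * √(1 - ρ ^ 2) ^ 2) * hs2
  · refine (spectralOperator_div_pow_four hρ0 (.of_forall fun _ => hasDerivAt_two_sub_sq)
      hasDerivAt_neg_two_mul).trans ?_
    field_simp
    ring
  · refine (wronskian_div_pow 4 hρ0 (hasDerivAt_two_sub_sq_sub_two_sqrt hρ1)
      hasDerivAt_two_sub_sq).trans ?_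
    field_simp
    linear_combination 2 * ρ ^ 6 * hs2
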